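/- Let k ≥ 2 and let T be a clause tree for x₁,…,x_k. Let I be an assignment with I(x₁) = ⋯ = I(x_k) = 0 and with the root's auxiliary variable assigned 1. Then the maximum, over all extensions of I to the remaining internal auxiliary variables, of the number of constraints of Tᵗ(T) satisfied equals 2(k−2). -/

import Mathlib

/-- A (candidate) clause tree: a full binary tree whose leaves are labeled by (indices of)
the clause variables x_i and whose internal nodes carry (indices of) auxiliary variables
b_v.  Leaf labels are interpreted by an assignment `x : ℕ → Bool` and internal labels by
an assignment `b : ℕ → Bool`. -/
inductive ClauseTree : Type
  | leaf (i : ℕ)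
  | node (v : ℕ) (l r : ClauseTree)

namespace ClauseTree

/-- Labels of the leaves, left to right. -/
def leaves : ClauseTree → List ℕ
  | leaf i => [i]
  | node _ l r => leaves l ++ leaves r

/-- Labels of the internal nodes. -/
def internals : ClauseTree → List ℕ
  | leaf _ => []
  | node v l r => v :: (internals l ++ internals r)

/-- `t` is a clause tree for x₁,…,x_k: its leaves are labeled bijectively by 1,…,k and
its internal auxiliary variables are pairwise distinct (they are fresh by construction,
living in a namespace separate from the leaf labels). -/
def IsClauseTree (k : ℕ) (t : ClauseTree) : Prop :=
  t.leaves.Nodup ∧ (∀ i, i ∈ t.leaves ↔ i ∈ Finset.Icc 1 k) ∧ t.internals.Nodup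

/-- var(v) of the root of `t`: the value of the leaf variable if `t` is a leaf, and the
value of the auxiliary variable b_v if the root is an internal node v. -/
def rootVar (x b : ℕ → Bool) : ClauseTree → Bool
  | leaf i => x i
  | node v _ _ => b v

/-- Number of satisfied constraints among the triangle {p ⊕ q = 1, p ⊕ r = 0, q ⊕ r = 0}. -/
def triCount (p q r : Bool) : ℕ :=
  (if xor p q = true then 1 else 0) +
  (if xor p r = false then 1 else 0) +
  (if xor q r = false then 1 else 0)

/-- Number of constraints of Tᵗ(t) satisfied by the assignment given by `x` and `b`:
for every internal node v with children u, w, the triangle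
{var(u) ⊕ var(w) = 1, var(u) ⊕ b_v = 0, var(w) ⊕ b_v = 0} (each of weight 1/2). -/
def countSat (x b : ℕ → Bool) : ClauseTree → ℕ
  | leaf _ => 0
  | node v l r =>
      countSat x b l + countSat x b r + triCount (rootVar x b l) (rootVar x b r) (b v)

/-- Total number of constraints of Tᵗ(t). -/
def numConstraints : ClauseTree → ℕ
  | leaf _ => 0
  | node _ l r => numConstraints l + numConstraints r + 3

/-- The OR of the values of the leaves below (the root of) `t`. -/
def orLeaves (x : ℕ → Bool) : ClauseTree → Bool
  | leaf i => x i
  | node _ l r => orLeaves x l || orLeaves x r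

/-- The assignment `b` of the internal auxiliary variables agrees with the canonical
extension of `x`: every internal node v gets the OR of the values of the leaves below v. -/
def Agrees (x b : ℕ → Bool) : ClauseTree → Prop
  | leaf _ => True
  | node v l r => b v = orLeaves x (node v l r) ∧ Agrees x b l ∧ Agrees x b r

end ClauseTree

/-!
A triangle never satisfies all three of its constraints; with a true auxiliary variable it
satisfies two only if one of its children is true, and none if both are false. Hence, when
all leaves are false, `countSat + 2·[root is true]` is at most twice the number of internal
nodes, so forcing the root to be true costs two constraints; making every other auxiliary
variable false attains this bound.
-/

namespace ClauseTree

theorem length_leaves (t : ClauseTree) : t.leaves.length = t.internals.length + 1 := by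
  induction t with
  | leaf i => rfl
  | node v l r ihl ihr =>
    simp only [leaves, internals, List.length_append, List.length_cons, ihl, ihr]
    omega

theorem IsClauseTree.length_internals {k : ℕ} {t : ClauseTree} (ht : IsClauseTree k t) :
    t.internals.length + 1 = k := by
  obtain ⟨hnodup, hmem, -⟩ := ht
  have hset : t.leaves.toFinset = Finset.Icc 1 k := by
    ext i
    simp [hmem i]
  rw [← length_leaves, ← List.toFinset_card_of_nodup hnodup, hset, Nat.card_Icc,
    Nat.add_sub_cancel]

theorem triCount_add_le (p q r : Bool) :
    triCount p q r + 2 * r.toNat ≤ 2 * (p.toNat + q.toNat + 1) := by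
  cases p <;> cases q <;> cases r <;> decide

variable {x : ℕ → Bool}

theorem countSat_add_le (b : ℕ → Bool) {t : ClauseTree} (hx : ∀ i ∈ t.leaves, x i = false) :
    countSat x b t + 2 * (rootVar x b t).toNat ≤ 2 * t.internals.length := by
  induction t with
  | leaf i => simp [countSat, rootVar, internals, hx i (by simp [leaves])]
  | node v l r ihl ihr =>
    have hl := ihl fun i hi => hx i (by simp [leaves, hi])
    have hr := ihr fun i hi => hx i (by simp [leaves, hi])
    have htri := triCount_add_le (rootVar x b l) (rootVar x b r) (b v)
    have hroot : rootVar x b (node v l r) = b v := rfl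
    simp only [countSat, hroot, internals, List.length_cons, List.length_append]
    omega

theorem rootVar_eq_false {b : ℕ → Bool} {t : ClauseTree} (hx : ∀ i ∈ t.leaves, x i = false)
    (hb : ∀ v ∈ t.internals, b v = false) : rootVar x b t = false := by
  cases t with
  | leaf i => exact hx i (by simp [leaves])
  | node v l r => exact hb v (by simp [internals])

theorem countSat_eq_of_forall_false {b : ℕ → Bool} {t : ClauseTree}
    (hx : ∀ i ∈ t.leaves, x i = false) (hb : ∀ v ∈ t.internals, b v = false) :
    countSat x b t = 2 * t.internals.length := by
  induction t with
  | leaf i => rfl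
  | node v l r ihl ihr =>
    have hxl : ∀ i ∈ l.leaves, x i = false := fun i hi => hx i (by simp [leaves, hi])
    have hxr : ∀ i ∈ r.leaves, x i = false := fun i hi => hx i (by simp [leaves, hi])
    have hbl : ∀ w ∈ l.internals, b w = false := fun w hw => hb w (by simp [internals, hw])
    have hbr : ∀ w ∈ r.internals, b w = false := fun w hw => hb w (by simp [internals, hw])
    simp only [countSat, internals, List.length_cons, List.length_append, ihl hxl hbl,
      ihr hxr hbr, rootVar_eq_false hxl hbl, rootVar_eq_false hxr hbr,
      hb v (by simp [internals])]
    have : triCount false false false = 2 := rfl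
    omega

end ClauseTree

open ClauseTree in
theorem clause_tree_all_false_root_true_general (k : ℕ)
    (v₀ : ℕ) (l r : ClauseTree)
    (ht : ClauseTree.IsClauseTree k (ClauseTree.node v₀ l r))
    (x : ℕ → Bool) (hx : ∀ i ∈ Finset.Icc 1 k, x i = false) :
    IsGreatest {n : ℕ | ∃ b : ℕ → Bool, b v₀ = true ∧
        n = ClauseTree.countSat x b (ClauseTree.node v₀ l r)}
      (2 * (k - 2)) := by
  have hk := ht.length_internals
  have hxt : ∀ i ∈ (node v₀ l r).leaves, x i = false := fun i hi => hx i ((ht.2.1 i).1 hi)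
  have hxl : ∀ i ∈ l.leaves, x i = false := fun i hi => hxt i (by simp [leaves, hi])
  have hxr : ∀ i ∈ r.leaves, x i = false := fun i hi => hxt i (by simp [leaves, hi])
  have hv₀ : v₀ ∉ l.internals ∧ v₀ ∉ r.internals := by
    simpa using (List.nodup_cons.mp ht.2.2).1
  simp only [internals, List.length_cons, List.length_append] at hk
  constructor
  · set b : ℕ → Bool := fun w => decide (w = v₀)
    have hb : ∀ t : ClauseTree, v₀ ∉ t.internals → ∀ w ∈ t.internals, b w = false :=
      fun t ht w hw => decide_eq_false fun h => ht (h ▸ hw)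
    refine ⟨b, by simp [b], ?_⟩
    simp only [countSat, countSat_eq_of_forall_false hxl (hb l hv₀.1),
      countSat_eq_of_forall_false hxr (hb r hv₀.2), rootVar_eq_false hxl (hb l hv₀.1),
      rootVar_eq_false hxr (hb r hv₀.2)]
    have : triCount false false (b v₀) = 0 := by simp [b, triCount]
    omega
  · rintro n ⟨b, hb, rfl⟩
    have := countSat_add_le b hxt
    simp only [rootVar, hb, Bool.toNat_true, internals, List.length_cons,
      List.length_append] at this
    omega

theorem clause_tree_all_false_root_true (k : ℕ) (hk : 2 ≤ k)
    (v₀ : ℕ) (l r : ClauseTree)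
    (ht : ClauseTree.IsClauseTree k (ClauseTree.node v₀ l r))
    (x : ℕ → Bool) (hx : ∀ i ∈ Finset.Icc 1 k, x i = false) :
    IsGreatest {n : ℕ | ∃ b : ℕ → Bool, b v₀ = true ∧
        n = ClauseTree.countSat x b (ClauseTree.node v₀ l r)}
      (2 * (k - 2)) :=
  clause_tree_all_false_root_true_general k v₀ l r ht x hx
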